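/- Let n ≥ 1, let V = ℝ^{4n} with its standard inner product, let I₁, I₂, I₃ : V →ₗ[ℝ] V be skew-adjoint linear maps satisfying I_i ∘ I_i = -id (i = 1,2,3) and I₁ ∘ I₂ ∘ I₃ = -id, and let (e_α)_{α=1,…,4n} be an orthonormal basis of V. Define b^i_{αβ} := -2⟪I_i e_α, e_β⟫ and B_{ij} := Σ_{α,β=1}^{4n} b^i_{αβ} b^j_{αβ} for i, j ∈ {1,2,3}. Then B_{ij} = 16n·δ_{ij}; that is, the 3×3 matrix B equals 16n times the identity matrix. -/
import Mathlib


open RealInnerProductSpace in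
/-- The Popp-measure matrix `B` of a quaternionic contact structure equals `16 n` times
the identity: for skew-adjoint `I₁, I₂, I₃` satisfying the quaternionic relations and an
orthonormal basis `(e α)` of `ℝ^{4n}`, with `b i α β = -2⟪Iᵢ e_α, e_β⟫` and
`B i j = ∑ α β, b i α β * b j α β`, one has `B i j = 16 n δ_{ij}`. -/
theorem popp_matrix_eq_sixteen_n_id
    (n : ℕ) (hn : 1 ≤ n)
    (I : Fin 3 → EuclideanSpace ℝ (Fin (4 * n)) →ₗ[ℝ] EuclideanSpace ℝ (Fin (4 * n)))
    (hskew : ∀ i : Fin 3, ∀ v w : EuclideanSpace ℝ (Fin (4 * n)),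
      ⟪I i v, w⟫ = -⟪v, I i w⟫)
    (hsq : ∀ i : Fin 3, (I i) ∘ₗ (I i) = -LinearMap.id)
    (hcomm : (I 0) ∘ₗ (I 1) ∘ₗ (I 2) = -LinearMap.id)
    (e : OrthonormalBasis (Fin (4 * n)) ℝ (EuclideanSpace ℝ (Fin (4 * n))))
    (b : Fin 3 → Fin (4 * n) → Fin (4 * n) → ℝ)
    (hb : ∀ i α β, b i α β = -2 * ⟪I i (e α), e β⟫)
    (B : Fin 3 → Fin 3 → ℝ)
    (hB : ∀ i j, B i j = ∑ α : Fin (4 * n), ∑ β : Fin (4 * n), b i α β * b j α β) :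
    ∀ i j : Fin 3, B i j = if i = j then 16 * n else 0 := by
  classical
  -- reduce B to 4 * ∑ α ⟪I i e α, I j e α⟫ via Parseval
  have key : ∀ i j, B i j = 4 * ∑ α : Fin (4 * n), ⟪I i (e α), I j (e α)⟫ := by
    intro i j
    rw [hB, Finset.mul_sum]
    refine Finset.sum_congr rfl fun α _ => ?_
    have hpar := e.sum_inner_mul_inner (I i (e α)) (I j (e α))
    calc ∑ β : Fin (4 * n), b i α β * b j α β
        = ∑ β : Fin (4 * n), 4 * (⟪I i (e α), e β⟫ * ⟪e β, I j (e α)⟫) := by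
          refine Finset.sum_congr rfl fun β _ => ?_
          rw [hb, hb, real_inner_comm (e β) (I j (e α))]
          ring
      _ = 4 * ⟪I i (e α), I j (e α)⟫ := by rw [← Finset.mul_sum, hpar]
  have hsq' : ∀ (k : Fin 3) v, I k (I k v) = -v := by
    intro k v
    have := congrArg (fun f => f v) (hsq k)
    simpa using this
  have hc : ∀ v, I 0 (I 1 (I 2 v)) = -v := by
    intro v
    have := congrArg (fun f => f v) hcomm
    simpa using this
  have h01 : ∀ v, I 0 (I 1 v) = I 2 v := by
    intro v
    have h := hc (I 2 v)
    rw [hsq' 2 v, map_neg, map_neg] at h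
    exact neg_injective h
  have h12 : ∀ v, I 1 (I 2 v) = I 0 v := by
    intro v
    have h := congrArg (I 0) (hc v)
    rw [hsq' 0 (I 1 (I 2 v)), map_neg] at h
    exact neg_injective h
  have h02 : ∀ v, I 0 (I 2 v) = -(I 1 v) := by
    intro v
    rw [← h01 v, hsq' 0 (I 1 v)]
  have zero_term : ∀ (k : Fin 3) α, ⟪e α, I k (e α)⟫ = 0 := by
    intro k α
    have h := hskew k (e α) (e α)
    have h2 : ⟪I k (e α), e α⟫ = ⟪e α, I k (e α)⟫ := real_inner_comm _ _
    linarith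
  have term01 : ∀ α, ⟪I 0 (e α), I 1 (e α)⟫ = 0 := by
    intro α
    rw [hskew, h01, zero_term, neg_zero]
  have term02 : ∀ α, ⟪I 0 (e α), I 2 (e α)⟫ = 0 := by
    intro α
    rw [hskew, h02, inner_neg_right, zero_term, neg_zero, neg_zero]
  have term12 : ∀ α, ⟪I 1 (e α), I 2 (e α)⟫ = 0 := by
    intro α
    rw [hskew, h12, zero_term, neg_zero]
  have diag : ∀ k : Fin 3, B k k = 16 * (n : ℝ) := by
    intro k
    rw [key]
    have ho := e.orthonormal
    rw [orthonormal_iff_ite] at ho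
    have hterm : ∀ α, ⟪I k (e α), I k (e α)⟫ = 1 := by
      intro α
      rw [hskew, hsq', inner_neg_right, neg_neg]
      simpa using ho α α
    rw [Finset.sum_congr rfl fun α _ => hterm α]
    simp [Finset.sum_const, Finset.card_univ]
    push_cast
    ring
  intro i j
  rcases eq_or_ne i j with rfl | hij
  · rw [if_pos rfl]; push_cast; exact diag i
  · rw [if_neg hij, key]
    have hz : ∑ α : Fin (4 * n), ⟪I i (e α), I j (e α)⟫ = 0 := by
      fin_cases i <;> fin_cases j <;>
        first
          | exact absurd rfl hij
          | · refine Finset.sum_eq_zero fun α _ => ?_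
              first
                | exact term01 α
                | exact term02 α
                | exact term12 α
                | (rw [real_inner_comm]; exact term01 α)
                | (rw [real_inner_comm]; exact term02 α)
                | (rw [real_inner_comm]; exact term12 α)
    rw [hz, mul_zero, Nat.cast_zero]
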